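/- For every x ∈ (0,∞) and all t, t' ∈ (0,∞): ( a x / √(2π) ) ∫_0^{min(t,t')} e^{-a²(t + t' - 2s)/8} (t + t' - 2s)^{-1/2} ds = 2x ( Φ( (a/2)(t + t')^{1/2} ) − Φ( (a/2) |t' − t|^{1/2} ) ). -/

import Mathlib

/-! The substitution `u = (a/2)√(t + t' - 2s)` turns the integral into `(2√(2π)/a) ∫ p_1(u) du`
over `(a/2)√|t' - t| ≤ u ≤ (a/2)√(t + t')`, since `t + t' - 2 min t t' = |t' - t|`. -/

open MeasureTheory Real Set

/-- Gaussian heat kernel `p_t(z) = (2πt)^{-1/2} exp(-z²/(2t))`. -/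
noncomputable def heatK (t z : ℝ) : ℝ :=
  (Real.sqrt (2 * Real.pi * t))⁻¹ * Real.exp (-(z ^ 2) / (2 * t))

/-- `q_t(x,y) = (1/(ax)) p_t(log x /a - log y /a + at/2)`. -/
noncomputable def qker (a t x y : ℝ) : ℝ :=
  (a * x)⁻¹ * heatK t (Real.log x / a - Real.log y / a + a * t / 2)

/-- `q̂_t(x,y) = (1/(ax)) p_t(log x /a - log y /a - at/2)`. -/
noncomputable def qhat (a t x y : ℝ) : ℝ :=
  (a * x)⁻¹ * heatK t (Real.log x / a - Real.log y / a - a * t / 2)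

/-- `θ(x,y,t) = log x /a - log y /a - at/2`. -/
noncomputable def theta (a x y t : ℝ) : ℝ :=
  Real.log x / a - Real.log y / a - a * t / 2

/-- `Ψ^x(t,y) = ∫_0^x q̂_t(z,y) dz`. -/
noncomputable def Psi (a x t y : ℝ) : ℝ := ∫ z in Set.Ioc (0:ℝ) x, qhat a t z y

/-- standard normal cdf `Φ(ξ) = ∫_{-∞}^ξ p_1(z) dz`. -/
noncomputable def Phi (ξ : ℝ) : ℝ := ∫ z in Set.Iic ξ, heatK 1 z

lemma heatK_one_eq_gaussianPDFReal : heatK 1 = ProbabilityTheory.gaussianPDFReal 0 1 := by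
  ext z
  simp [heatK, ProbabilityTheory.gaussianPDFReal]

lemma continuous_heatK_one : Continuous (heatK 1) := by
  unfold heatK
  fun_prop

lemma integrable_heatK_one : Integrable (heatK 1) := by
  rw [heatK_one_eq_gaussianPDFReal]
  exact ProbabilityTheory.integrable_gaussianPDFReal 0 1

lemma Phi_sub_Phi (b c : ℝ) : Phi b - Phi c = ∫ u in c..b, heatK 1 u :=
  intervalIntegral.integral_Iic_sub_Iic integrable_heatK_one.integrableOn
    integrable_heatK_one.integrableOn

lemma hasDerivAt_Phi (ξ : ℝ) : HasDerivAt Phi (heatK 1 ξ) ξ := by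
  have hPhi : Phi = fun y => Phi 0 + ∫ u in (0:ℝ)..y, heatK 1 u := by
    ext y
    rw [← Phi_sub_Phi, add_sub_cancel]
  rw [hPhi]
  exact (continuous_heatK_one.integral_hasStrictDerivAt 0 ξ).hasDerivAt.const_add _

lemma continuous_Phi : Continuous Phi :=
  continuous_iff_continuousAt.2 fun ξ => (hasDerivAt_Phi ξ).continuousAt

lemma hasDerivAt_Phi_mul_sqrt {a T s : ℝ} (hs : 0 < T - 2 * s) :
    HasDerivAt (fun s => Phi (a / 2 * √(T - 2 * s)))
      (-(a / (2 * √(2 * π))) * (exp (-a ^ 2 * (T - 2 * s) / 8) * (T - 2 * s) ^ (-(1:ℝ) / 2)))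
      s := by
  have hv : HasDerivAt (fun s : ℝ => T - 2 * s) (-2) s := by
    simpa using ((hasDerivAt_id s).const_mul (2:ℝ)).const_sub T
  refine ((hasDerivAt_Phi _).comp s ((hv.sqrt hs.ne').const_mul (a / 2))).congr_deriv ?_
  have hsq : √(T - 2 * s) ^ 2 = T - 2 * s := sq_sqrt hs.le
  have hrpow : (T - 2 * s) ^ (-(1:ℝ) / 2) = (√(T - 2 * s))⁻¹ := by
    rw [neg_div, rpow_neg hs.le, ← sqrt_eq_rpow]
  have hexp : -(a / 2 * √(T - 2 * s)) ^ 2 / 2 = -a ^ 2 * (T - 2 * s) / 8 := by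
    rw [mul_pow, hsq]
    ring
  simp only [heatK, mul_one]
  rw [hexp, hrpow]
  field_simp

/-- The integrand may blow up at `s = m = T/2`; it is integrable there because it is the
nonnegative derivative of a function continuous up to that point. -/
lemma integral_exp_mul_rpow_neg_half {a T m : ℝ} (ha : a ≠ 0) (hm : 0 ≤ m) (hmT : 2 * m ≤ T) :
    ∫ s in (0:ℝ)..m, exp (-a ^ 2 * (T - 2 * s) / 8) * (T - 2 * s) ^ (-(1:ℝ) / 2)
      = 2 * √(2 * π) / a * (Phi (a / 2 * √T) - Phi (a / 2 * √(T - 2 * m))) := by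
  set G : ℝ → ℝ := fun s => -(2 * √(2 * π) / a) * Phi (a / 2 * √(T - 2 * s))
  have hG_cont : ContinuousOn G (Icc 0 m) := by
    simp only [G]
    exact (continuous_const.mul (continuous_Phi.comp (by fun_prop))).continuousOn
  have hG_deriv : ∀ s ∈ Ioo 0 m, HasDerivAt G
      (exp (-a ^ 2 * (T - 2 * s) / 8) * (T - 2 * s) ^ (-(1:ℝ) / 2)) s := by
    intro s hs
    refine ((hasDerivAt_Phi_mul_sqrt (a := a) (by linarith [hs.2] : 0 < T - 2 * s)).const_mul
      (-(2 * √(2 * π) / a))).congr_deriv ?_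
    field_simp
  have hint : IntervalIntegrable
      (fun s => exp (-a ^ 2 * (T - 2 * s) / 8) * (T - 2 * s) ^ (-(1:ℝ) / 2)) volume 0 m := by
    rw [intervalIntegrable_iff_integrableOn_Ioc_of_le hm]
    refine intervalIntegral.integrableOn_deriv_of_nonneg hG_cont hG_deriv fun s hs => ?_
    exact mul_nonneg (exp_pos _).le (rpow_nonneg (by linarith [hs.2]) _)
  rw [intervalIntegral.integral_eq_sub_of_hasDerivAt_of_le hm hG_cont hG_deriv hint]
  simp only [G, mul_zero, sub_zero]
  ring

theorem martingale_covariance_formula_general (a : ℝ) (ha : 0 < a) (x : ℝ)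
    (t t' : ℝ) (ht : 0 < t) (ht' : 0 < t') :
    (a * x / Real.sqrt (2 * Real.pi)) *
        (∫ s in (0:ℝ)..(min t t'),
          Real.exp (-a ^ 2 * (t + t' - 2 * s) / 8) * (t + t' - 2 * s) ^ (-(1:ℝ) / 2))
      = 2 * x * (Phi (a / 2 * Real.sqrt (t + t')) - Phi (a / 2 * Real.sqrt |t' - t|)) := by
  have hgap : t + t' - 2 * min t t' = |t' - t| := by
    rw [← min_add_max, ← max_sub_min_eq_abs]
    ring
  have hmin : 0 ≤ min t t' := le_min ht.le ht'.le
  rw [integral_exp_mul_rpow_neg_half ha.ne' hmin (by linarith [abs_nonneg (t' - t)]), hgap]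
  field_simp

theorem martingale_covariance_formula (a : ℝ) (ha : 0 < a) (x : ℝ) (hx : 0 < x)
    (t t' : ℝ) (ht : 0 < t) (ht' : 0 < t') :
    (a * x / Real.sqrt (2 * Real.pi)) *
        (∫ s in (0:ℝ)..(min t t'),
          Real.exp (-a ^ 2 * (t + t' - 2 * s) / 8) * (t + t' - 2 * s) ^ (-(1:ℝ) / 2))
      = 2 * x * (Phi (a / 2 * Real.sqrt (t + t')) - Phi (a / 2 * Real.sqrt |t' - t|)) :=
  martingale_covariance_formula_general a ha x t t' ht ht'
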